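/- Let ξ be a unit vector field on an n-dimensional Riemannian manifold satisfying ∇_X ξ = -θ(ξ)X + g(X,ξ)θ^♯. Then the connection Laplacian satisfies ∇*∇(ξ^♭) = d(θ(ξ)) + (n-1)(θ(ξ))θ - ∇_ξ θ. -/
import Mathlib


open scoped BigOperators

/-- Abstract calculus of vector fields on a "manifold" with point set `M`:
vector fields form a module `V` over the ring of functions `M → ℝ`, act on
functions as derivations, and carry a Lie bracket. -/
structure VFCalculus (M : Type*) (V : Type*) [AddCommGroup V] [Module (M → ℝ) V] where
  act : V → (M → ℝ) → (M → ℝ)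
  act_add_left : ∀ X Y f, act (X + Y) f = act X f + act Y f
  act_smul_left : ∀ (h : M → ℝ) X f, act (h • X) f = h * act X f
  act_add_right : ∀ X f g, act X (f + g) = act X f + act X g
  act_mul : ∀ X f g, act X (f * g) = f * act X g + g * act X f
  act_const : ∀ X (c : ℝ), act X (fun _ => c) = 0
  bracket : V → V → V
  act_bracket : ∀ X Y f, act (bracket X Y) f = act X (act Y f) - act Y (act X f)

variable {M V : Type*} [AddCommGroup V] [Module (M → ℝ) V]

/-- `D` is a linear connection on vector fields. -/
def IsConnection (C : VFCalculus M V) (D : V → V → V) : Prop :=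
  (∀ X Y Z, D (X + Y) Z = D X Z + D Y Z) ∧
  (∀ (f : M → ℝ) (X Y : V), D (f • X) Y = f • D X Y) ∧
  (∀ X Y Z, D X (Y + Z) = D X Y + D X Z) ∧
  (∀ (f : M → ℝ) (X Y : V), D X (f • Y) = f • D X Y + (C.act X f) • Y)

/-- `D` is torsion-free. -/
def IsTorsionFree (C : VFCalculus M V) (D : V → V → V) : Prop :=
  ∀ X Y, D X Y - D Y X = C.bracket X Y

/-- `g` is a Riemannian metric: symmetric, pointwise nonnegative and definite. -/
def IsMetric (g : V →ₗ[M → ℝ] V →ₗ[M → ℝ] (M → ℝ)) : Prop :=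
  (∀ X Y, g X Y = g Y X) ∧ (∀ (X : V) (x : M), 0 ≤ g X X x) ∧ (∀ X, g X X = 0 → X = 0)

/-- `nab` is the Levi-Civita connection of `g`: a torsion-free metric connection. -/
def IsLeviCivita (C : VFCalculus M V) (g : V →ₗ[M → ℝ] V →ₗ[M → ℝ] (M → ℝ))
    (nab : V → V → V) : Prop :=
  IsConnection C nab ∧ IsTorsionFree C nab ∧
  ∀ X Y Z, C.act X (g Y Z) = g (nab X Y) Z + g Y (nab X Z)

/-- Exterior derivative of a 1-form. -/
def dOne (C : VFCalculus M V) (ω : V → M → ℝ) (X Y : V) : M → ℝ :=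
  C.act X (ω Y) - C.act Y (ω X) - ω (C.bracket X Y)

/-- Covariant derivative `(∇_X ω)(Y)` of a 1-form. -/
def nabOne (C : VFCalculus M V) (nab : V → V → V) (ω : V → M → ℝ) (X Y : V) : M → ℝ :=
  C.act X (ω Y) - ω (nab X Y)

/-- Codifferential of a 1-form, computed with a global orthonormal frame `e`. -/
def codiff (C : VFCalculus M V) (nab : V → V → V) {n : ℕ} (e : Fin n → V)
    (ω : V → M → ℝ) : M → ℝ :=
  -∑ i, nabOne C nab ω (e i) (e i)

/-- Codifferential of a 2-form, computed with a global orthonormal frame `e`. -/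
def codiff2 (C : VFCalculus M V) (nab : V → V → V) {n : ℕ} (e : Fin n → V)
    (ω : V → V → M → ℝ) (Y : V) : M → ℝ :=
  -∑ i, (C.act (e i) (ω (e i) Y) - ω (nab (e i) (e i)) Y - ω (e i) (nab (e i) Y))

/-- Second covariant derivative `(∇²_{X,Z} ω)(Y)` of a 1-form. -/
def secondD (C : VFCalculus M V) (nab : V → V → V) (ω : V → M → ℝ) (X Z Y : V) : M → ℝ :=
  C.act X (nabOne C nab ω Z Y) - nabOne C nab ω (nab X Z) Y - nabOne C nab ω Z (nab X Y)

/-- Rough (connection) Laplacian `∇*∇` on 1-forms, w.r.t. an orthonormal frame `e`. -/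
def roughLap (C : VFCalculus M V) (nab : V → V → V) {n : ℕ} (e : Fin n → V)
    (ω : V → M → ℝ) (Y : V) : M → ℝ :=
  -∑ i, secondD C nab ω (e i) (e i) Y

/-- Curvature tensor of a connection. -/
def Rm (C : VFCalculus M V) (nab : V → V → V) (X Y Z : V) : V :=
  nab X (nab Y Z) - nab Y (nab X Z) - nab (C.bracket X Y) Z

/-- Ricci curvature, computed with a global orthonormal frame `e`. -/
def Ricci (C : VFCalculus M V) (g : V →ₗ[M → ℝ] V →ₗ[M → ℝ] (M → ℝ))
    (nab : V → V → V) {n : ℕ} (e : Fin n → V) (X Y : V) : M → ℝ :=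
  ∑ i, g (Rm C nab (e i) X Y) (e i)

/-- `e` is a global orthonormal frame. -/
def IsONFrame (g : V →ₗ[M → ℝ] V →ₗ[M → ℝ] (M → ℝ)) {n : ℕ} (e : Fin n → V) : Prop :=
  (∀ i j, g (e i) (e j) = fun _ => if i = j then (1 : ℝ) else 0) ∧
  (∀ X : V, X = ∑ i, g X (e i) • e i)

lemma VF_act_neg (C : VFCalculus M V) (X : V) (h : M → ℝ) :
    C.act X (-h) = -C.act X h := by
  have h1 : -h = (fun _ => (-1:ℝ)) * h := by funext x; simp
  rw [h1, C.act_mul, C.act_const]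
  funext x; simp

lemma VF_act_sub (C : VFCalculus M V) (X : V) (a b : M → ℝ) :
    C.act X (a - b) = C.act X a - C.act X b := by
  rw [sub_eq_add_neg, C.act_add_right, VF_act_neg, sub_eq_add_neg]

lemma VF_act_zero_left (C : VFCalculus M V) (f : M → ℝ) : C.act 0 f = 0 := by
  have h := C.act_smul_left (0 : M → ℝ) 0 f
  simpa using h

lemma VF_act_sum (C : VFCalculus M V) {ι : Type*} (s : Finset ι)
    (c : ι → M → ℝ) (v : ι → V) (f : M → ℝ) :
    C.act (∑ i ∈ s, c i • v i) f = ∑ i ∈ s, c i * C.act (v i) f := by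
  induction s using Finset.cons_induction with
  | empty => simp [VF_act_zero_left]
  | cons a s h ih =>
      rw [Finset.sum_cons, C.act_add_left, C.act_smul_left, ih, Finset.sum_cons]

lemma nab_zero_left {nab : V → V → V}
    (h2 : ∀ (f : M → ℝ) (X Y : V), nab (f • X) Y = f • nab X Y) (Y : V) :
    nab 0 Y = 0 := by
  have h := h2 (0 : M → ℝ) 0 Y
  simpa using h

lemma nab_sum_left {nab : V → V → V}
    (h1 : ∀ X Y Z : V, nab (X + Y) Z = nab X Z + nab Y Z)
    (h2 : ∀ (f : M → ℝ) (X Y : V), nab (f • X) Y = f • nab X Y)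
    {ι : Type*} (s : Finset ι) (c : ι → M → ℝ) (v : ι → V) (Y : V) :
    nab (∑ i ∈ s, c i • v i) Y = ∑ i ∈ s, c i • nab (v i) Y := by
  induction s using Finset.cons_induction with
  | empty => simp [nab_zero_left h2]
  | cons a s h ih =>
      rw [Finset.sum_cons, h1, h2, ih, Finset.sum_cons]

/-- The connection Laplacian of `ξ♭` equals
`d(θ(ξ)) + (n-1)θ(ξ)θ - ∇_ξ θ`. -/
theorem rough_laplacian_unit_field
    (C : VFCalculus M V) (g : V →ₗ[M → ℝ] V →ₗ[M → ℝ] (M → ℝ)) (hg : IsMetric g)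
    (nab : V → V → V) (hnab : IsLeviCivita C g nab)
    (θ : V →ₗ[M → ℝ] (M → ℝ)) (θs : V) (hθs : ∀ Y : V, g θs Y = θ Y)
    (ξ : V) (hunit : g ξ ξ = 1)
    (hxi : ∀ X : V, nab X ξ = -(θ ξ • X) + g X ξ • θs)
    {n : ℕ} (e : Fin n → V) (he : IsONFrame g e) :
    ∀ X : V,
      roughLap C nab e (fun Z => g ξ Z) X
      = C.act X (θ ξ) + (fun _ => (n : ℝ) - 1) * (θ ξ * θ X)
        - nabOne C nab (fun Z => θ Z) ξ X := by
  obtain ⟨⟨hadd1, hsmul1, hadd2, hleib⟩, htf, hcompat⟩ := hnab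
  obtain ⟨hsym, _, _⟩ := hg
  obtain ⟨horth, hframe⟩ := he
  intro X
  set f : M → ℝ := θ ξ with hf
  -- ∇_P ξ♭ evaluated on Q
  have hB : ∀ P Q : V, nabOne C nab (fun Z => g ξ Z) P Q
      = -(f * g P Q) + g P ξ * θ Q := by
    intro P Q
    show C.act P (g ξ Q) - g ξ (nab P Q) = _
    rw [hcompat P ξ Q, hxi P]
    simp only [map_add, map_neg, map_smul, LinearMap.add_apply, LinearMap.neg_apply,
      LinearMap.smul_apply, smul_eq_mul, hθs Q]
    ring
  have hper : ∀ i, secondD C nab (fun Z => g ξ Z) (e i) (e i) X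
      = -(C.act (e i) f * g (e i) X)
        + (-(f * g (e i) (e i)) + g (e i) ξ * θ (e i)) * θ X
        + g (e i) ξ * (C.act (e i) (θ X) - θ (nab (e i) X)) := by
    intro i
    show C.act (e i) (nabOne C nab (fun Z => g ξ Z) (e i) X)
        - nabOne C nab (fun Z => g ξ Z) (nab (e i) (e i)) X
        - nabOne C nab (fun Z => g ξ Z) (e i) (nab (e i) X) = _
    rw [hB, hB, hB]
    rw [C.act_add_right, VF_act_neg, C.act_mul, C.act_mul,
      hcompat (e i) (e i) X, hcompat (e i) (e i) ξ, hxi (e i)]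
    simp only [map_add, map_neg, map_smul, LinearMap.add_apply, LinearMap.neg_apply,
      LinearMap.smul_apply, smul_eq_mul, hθs, hsym (e i) θs]
    ring
  -- expansions via the frame
  have hactX : C.act X f = ∑ i, g (e i) X * C.act (e i) f := by
    conv_lhs => rw [hframe X]
    rw [VF_act_sum]
    exact Finset.sum_congr rfl fun i _ => by rw [hsym X (e i)]
  have hactξ : C.act ξ (θ X) = ∑ i, g (e i) ξ * C.act (e i) (θ X) := by
    conv_lhs => rw [hframe ξ]
    rw [VF_act_sum]
    exact Finset.sum_congr rfl fun i _ => by rw [hsym ξ (e i)]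
  have hθξ : f = ∑ i, g (e i) ξ * θ (e i) := by
    rw [hf]
    conv_lhs => rw [hframe ξ]
    rw [map_sum]
    exact Finset.sum_congr rfl fun i _ => by
      rw [map_smul, smul_eq_mul, hsym ξ (e i)]
  have hnabξ : θ (nab ξ X) = ∑ i, g (e i) ξ * θ (nab (e i) X) := by
    conv_lhs => rw [hframe ξ, nab_sum_left hadd1 hsmul1]
    rw [map_sum]
    exact Finset.sum_congr rfl fun i _ => by
      rw [map_smul, smul_eq_mul, hsym ξ (e i)]
  have hgii : ∀ i : Fin n, g (e i) (e i) = 1 := by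
    intro i; rw [horth i i]; funext x; simp
  show -∑ i, secondD C nab (fun Z => g ξ Z) (e i) (e i) X = _
  rw [Finset.sum_congr rfl fun i _ => hper i]
  rw [Finset.sum_add_distrib, Finset.sum_add_distrib]
  have s1 : ∑ i, -(C.act (e i) f * g (e i) X) = -C.act X f := by
    rw [hactX, ← Finset.sum_neg_distrib]
    exact Finset.sum_congr rfl fun i _ => by ring
  have s2 : ∑ i, (-(f * g (e i) (e i)) + g (e i) ξ * θ (e i)) * θ X
      = (-((fun _ => (n : ℝ)) * f) + f) * θ X := by
    rw [← Finset.sum_mul]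
    congr 1
    rw [Finset.sum_add_distrib, ← hθξ]
    congr 1
    calc ∑ x : Fin n, -(f * g (e x) (e x)) = ∑ _x : Fin n, -f :=
          Finset.sum_congr rfl fun i _ => by rw [hgii i, mul_one]
      _ = -((fun _ => (n : ℝ)) * f) := by
          rw [Finset.sum_const, Finset.card_univ, Fintype.card_fin]
          funext x
          simp [mul_comm]
  have s3 : ∑ i, g (e i) ξ * (C.act (e i) (θ X) - θ (nab (e i) X))
      = C.act ξ (θ X) - θ (nab ξ X) := by
    rw [hactξ, hnabξ, ← Finset.sum_sub_distrib]
    exact Finset.sum_congr rfl fun i _ => by ring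
  rw [s1, s2, s3]
  have hnab1 : nabOne C nab (fun Z => θ Z) ξ X = C.act ξ (θ X) - θ (nab ξ X) := rfl
  have hc : (fun _ : M => (n : ℝ) - 1) = (fun _ : M => (n : ℝ)) - 1 := by
    funext x; simp
  rw [hnab1, hc]
  ring
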